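/- Let u_i : X_1 × ⋯ × X_n → [0,1] be multilinear utility functions on products of simplices, let d be a pure Nash equilibrium, and define p_i(x) = (d_i^⊤ x_i)(α + 1 − ∏_{j≠i} d_j^⊤ x_j) for α ≥ 0. Then p_i(x) ≥ 0 for all x, p_i(d) = α, and in the augmented game v_i = u_i + p_i, the pure strategy d_i satisfies v_i(d_i, x_{-i}) ≥ v_i(x_i, x_{-i}) + α·(1 − d_i^⊤ x_i) for all mixed profiles x. -/

import Mathlib

variable {n : ℕ} {A : Fin n → Type*}

/-- Mixed (multilinear) extension of a pure utility `U` over a product of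
simplices: `u(x) = ∑_a (∏_j x_j(a_j)) · U(a)`. -/
def mixedUtil [∀ i, Fintype (A i)] (U : (∀ j, A j) → ℝ)
    (x : ∀ i, A i → ℝ) : ℝ :=
  ∑ a : (∀ j, A j), (∏ j, x j (a j)) * U a

/-- The pure strategy placing all mass on action `b`. -/
def pureStrat [DecidableEq α] (b : α) : α → ℝ := fun a => if a = b then 1 else 0

/-! By multilinearity `u_i(x) = ∑_c x_i(c) u_i(c, x₋ᵢ)`, and replacing `x_i` by `d_i` gives
`u_i(d_i, x₋ᵢ)`. A deviation `c` gains at most `1 - P` over `d_i`, where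
`P = ∏_{j ≠ i} x_j(d_j)`: the opponents' profile `d₋ᵢ`, of weight `P`, yields no gain because `d`
is a Nash equilibrium, and any other profile gains at most `1` because `U` takes values in
`[0, 1]`. Hence `u_i(x) - u_i(d_i, x₋ᵢ) ≤ (1 - x_i(d_i))(1 - P)`, while the payment rises from
`x_i(d_i)(α + 1 - P)` to `α + 1 - P`, which exceeds that loss by exactly `α(1 - x_i(d_i))`. -/

theorem sum_mul_le_mul_one_sub_of_mem_stdSimplex {ι : Type*} [Fintype ι] [DecidableEq ι]
    {w V : ι → ℝ} {K : ℝ} (hw : w ∈ stdSimplex ℝ ι) (hV : ∀ i, V i ≤ K) {r : ι}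
    (hVr : V r ≤ 0) :
    ∑ i, w i * V i ≤ K * (1 - w r) :=
  calc ∑ i, w i * V i ≤ ∑ i, w i * (K - if i = r then K else 0) := by
        refine Finset.sum_le_sum fun i _ => mul_le_mul_of_nonneg_left ?_ (hw.1 i)
        split_ifs with h
        · subst h; linarith
        · simpa using hV i
    _ = K * (1 - w r) := by
        simp [mul_sub, Finset.sum_sub_distrib, ← Finset.mul_sum, hw.2, mul_comm]

theorem prod_mem_stdSimplex {ι : Type*} [Fintype ι] [DecidableEq ι] {κ : ι → Type*}
    [∀ i, Fintype (κ i)] {z : ∀ i, κ i → ℝ} (hz : ∀ i, z i ∈ stdSimplex ℝ (κ i)) :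
    (fun r : ∀ i, κ i => ∏ i, z i (r i)) ∈ stdSimplex ℝ (∀ i, κ i) :=
  ⟨fun r => Finset.prod_nonneg fun i _ => (hz i).1 (r i), by
    rw [← Fintype.prod_sum]; simp [fun i => (hz i).2]⟩

theorem Equiv.piSplitAt_symm_update {α : Type*} [DecidableEq α] {β : α → Type*} (d : ∀ j, β j)
    (i : α) (c : β i) : (Equiv.piSplitAt i β).symm (c, fun j => d j) = Function.update d i c := by
  funext j
  by_cases h : j = i
  · subst h; simp
  · simp [h]

theorem Equiv.piSplitAt_symm_apply_self {α : Type*} [DecidableEq α] {β : α → Type*} (i : α)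
    (c : β i) (r : ∀ j : {j // j ≠ i}, β j) : (Equiv.piSplitAt i β).symm (c, r) i = c := by
  simp

theorem Equiv.piSplitAt_symm_apply_subtype {α : Type*} [DecidableEq α] {β : α → Type*} (i : α)
    (c : β i) (r : ∀ j : {j // j ≠ i}, β j) (j : {j // j ≠ i}) :
    (Equiv.piSplitAt i β).symm (c, r) j = r j := by
  simp [j.2]

section
variable [∀ i, Fintype (A i)]

-- `u(c, x₋ᵢ)` in the usual notation.
def utilAgainst (U : (∀ j, A j) → ℝ) (x : ∀ i, A i → ℝ) (i : Fin n) (c : A i) : ℝ :=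
  ∑ r : (∀ j : {j // j ≠ i}, A j),
    (∏ j : {j // j ≠ i}, x j (r j)) * U ((Equiv.piSplitAt i A).symm (c, r))

theorem mixedUtil_eq_sum_mul_utilAgainst (U : (∀ j, A j) → ℝ) (x : ∀ i, A i → ℝ) (i : Fin n) :
    mixedUtil U x = ∑ c, x i c * utilAgainst U x i c := by
  rw [mixedUtil, ← (Equiv.piSplitAt i A).symm.sum_comp, Fintype.sum_prod_type]
  refine Finset.sum_congr rfl fun c _ => ?_
  rw [utilAgainst, Finset.mul_sum]
  refine Finset.sum_congr rfl fun r _ => ?_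
  rw [Fintype.prod_eq_mul_prod_subtype_ne _ i, Equiv.piSplitAt_symm_apply_self, mul_assoc]
  simp only [Equiv.piSplitAt_symm_apply_subtype]

theorem utilAgainst_update_self (U : (∀ j, A j) → ℝ) (x : ∀ i, A i → ℝ) (i : Fin n)
    (s : A i → ℝ) (c : A i) : utilAgainst U (Function.update x i s) i c = utilAgainst U x i c := by
  simp only [utilAgainst]
  refine Finset.sum_congr rfl fun r _ => ?_
  congr 1
  exact Finset.prod_congr rfl fun j _ => by rw [Function.update_of_ne j.2]

variable [∀ i, DecidableEq (A i)]

theorem mixedUtil_update_pureStrat (U : (∀ j, A j) → ℝ) (x : ∀ i, A i → ℝ) (i : Fin n)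
    (c : A i) : mixedUtil U (Function.update x i (pureStrat c)) = utilAgainst U x i c := by
  simp [mixedUtil_eq_sum_mul_utilAgainst U _ i, utilAgainst_update_self, pureStrat]

theorem utilAgainst_sub_le_one_sub_prod {U : (∀ j, A j) → ℝ} (hU : ∀ a, U a ∈ Set.Icc (0 : ℝ) 1)
    {d : ∀ j, A j} {i : Fin n} (hNash : ∀ c : A i, U (Function.update d i c) ≤ U d)
    {x : ∀ i, A i → ℝ} (hx : ∀ j, x j ∈ stdSimplex ℝ (A j)) (c : A i) :
    utilAgainst U x i c - utilAgainst U x i (d i) ≤ 1 - ∏ j ∈ Finset.univ.erase i, x j (d j) := by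
  have hbound := sum_mul_le_mul_one_sub_of_mem_stdSimplex (prod_mem_stdSimplex fun j => hx j)
    (V := fun r => U ((Equiv.piSplitAt i A).symm (c, r)) - U ((Equiv.piSplitAt i A).symm (d i, r)))
    (K := 1) (fun r => by linarith [(hU ((Equiv.piSplitAt i A).symm (c, r))).2,
      (hU ((Equiv.piSplitAt i A).symm (d i, r))).1])
    (r := fun j => d j) (by simpa [Equiv.piSplitAt_symm_update] using hNash c)
  rw [Finset.prod_subtype (p := (· ≠ i)) (F := inferInstance) _ fun j => by simp]
  simpa [utilAgainst, ← Finset.sum_sub_distrib, mul_sub] using hbound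

theorem mixedUtil_sub_update_pureStrat_le {U : (∀ j, A j) → ℝ}
    (hU : ∀ a, U a ∈ Set.Icc (0 : ℝ) 1) {d : ∀ j, A j} {i : Fin n}
    (hNash : ∀ c : A i, U (Function.update d i c) ≤ U d)
    {x : ∀ i, A i → ℝ} (hx : ∀ j, x j ∈ stdSimplex ℝ (A j)) :
    mixedUtil U x - mixedUtil U (Function.update x i (pureStrat (d i))) ≤
      (1 - x i (d i)) * (1 - ∏ j ∈ Finset.univ.erase i, x j (d j)) := by
  have hbound := sum_mul_le_mul_one_sub_of_mem_stdSimplex (hx i) (r := d i)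
    (V := fun c => utilAgainst U x i c - utilAgainst U x i (d i))
    (utilAgainst_sub_le_one_sub_prod hU hNash hx) (sub_self _).le
  rw [mixedUtil_update_pureStrat, mixedUtil_eq_sum_mul_utilAgainst U x i]
  simpa [mul_sub, Finset.sum_sub_distrib, ← Finset.sum_mul, (hx i).2, mul_comm] using hbound

end

/-- Key property of the normal-form steering payments (equation (4.2)):
with `p_i(x) = (d_i^⊤ x_i)(α + 1 − ∏_{j≠i} d_j^⊤ x_j)` added to a pure Nash
equilibrium `d` of the mixed extension of `U`, one has `p_i(x) ≥ 0`,
`p_i(d) = α`, and in the augmented game `v_i = u_i + p_i` the direct strategy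
`d_i` dominates by margin `α(1 − d_i^⊤ x_i)`. -/
theorem stmt_14 [∀ i, Fintype (A i)] [∀ i, DecidableEq (A i)]
    (U : Fin n → (∀ j, A j) → ℝ)
    (hU : ∀ i a, U i a ∈ Set.Icc (0 : ℝ) 1)
    (d : ∀ i, A i)
    (hNash : ∀ (i : Fin n) (a : A i),
      U i (Function.update d i a) ≤ U i d)
    (α : ℝ) (hα : 0 ≤ α)
    (p : Fin n → (∀ i, A i → ℝ) → ℝ)
    (hp : ∀ i x, p i x =
      x i (d i) * (α + 1 - ∏ j ∈ Finset.univ.erase i, x j (d j)))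
    (x : ∀ i, A i → ℝ)
    (hx : ∀ i, (∀ a, 0 ≤ x i a) ∧ ∑ a, x i a = 1) :
    0 ≤ p i' x ∧
    p i' (fun j => pureStrat (d j)) = α ∧
    mixedUtil (U i') (Function.update x i' (pureStrat (d i'))) +
        p i' (Function.update x i' (pureStrat (d i'))) ≥
      mixedUtil (U i') x + p i' x + α * (1 - x i' (d i')) := by
  have hx' : ∀ j, x j ∈ stdSimplex ℝ (A j) := hx
  have hP : ∏ j ∈ Finset.univ.erase i', x j (d j) ∈ Set.Icc (0 : ℝ) 1 :=
    ⟨Finset.prod_nonneg fun j _ => (hx j).1 _, Finset.prod_le_one (fun j _ => (hx j).1 _)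
      fun j _ => (mem_Icc_of_mem_stdSimplex (hx' j) _).2⟩
  have ht := mem_Icc_of_mem_stdSimplex (hx' i') (d i')
  have hpy : p i' (Function.update x i' (pureStrat (d i'))) =
      α + 1 - ∏ j ∈ Finset.univ.erase i', x j (d j) := by
    rw [hp, Finset.prod_congr rfl fun j hj => by
      rw [Function.update_of_ne (Finset.ne_of_mem_erase hj)]]
    simp [pureStrat]
  have hkey := mixedUtil_sub_update_pureStrat_le (hU i') (hNash i') hx'
  refine ⟨?_, ?_, ?_⟩
  · rw [hp]; exact mul_nonneg ht.1 (by linarith [hP.2])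
  · simp [hp, pureStrat]
  · rw [hpy, hp]; linarith
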